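/- arXiv:1706.04072 — 4 statements merged into one kernel-verified Lean document; each statement's English description precedes it below -/
import Mathlib

section
/- If a conjunctive Boolean network has a sink node (a node with out-degree zero in the dependency graph) that is not directly observable, then the CBN is not observable. -/
/-- One synchronous step of a conjunctive Boolean network with dependency relation `adj`
(`adj j i` means there is an edge `j → i`, i.e. `X_j` appears in the update of `X_i`). -/
def cbnStep {n : ℕ} (adj : Fin n → Fin n → Prop) [DecidableRel adj]
    (x : Fin n → Bool) : Fin n → Bool :=
  fun i => decide (∀ j, adj j i → x j = true)

/-- Observability on `[0,N]`: the outputs are the first `m` state variables, and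
distinct initial states yield distinct output sequences on `[0,N]`. -/
def ObservableOn (n m : ℕ) (adj : Fin n → Fin n → Prop) [DecidableRel adj] (N : ℕ) : Prop :=
  ∀ x y : Fin n → Bool,
    (∀ k ≤ N, ∀ j : Fin n, (j : ℕ) < m →
      (cbnStep adj)^[k] x j = (cbnStep adj)^[k] y j) → x = y

/-- Observability: observable on `[0,N]` for some `N ≥ 0`. -/
def Observable (n m : ℕ) (adj : Fin n → Fin n → Prop) [DecidableRel adj] : Prop :=
  ∃ N : ℕ, ObservableOn n m adj N

/-- If a CBN has a sink node (no outgoing edges in the dependency graph) that is not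
directly observable, then the CBN is not observable. -/
theorem sink_not_observable (n m : ℕ) (adj : Fin n → Fin n → Prop) [DecidableRel adj]
    (i : Fin n) (hno : ¬ ((i : ℕ) < m)) (hsink : ∀ j : Fin n, ¬ adj i j) :
    ¬ Observable n m adj := by
  rintro ⟨N, hObs⟩
  set x : Fin n → Bool := fun _ => true with hx
  set y : Fin n → Bool := fun j => if j = i then false else true with hy
  have hstep : cbnStep adj x = cbnStep adj y := by
    funext j
    simp only [cbnStep, hx, hy]
    congr 1
    apply propext
    constructor <;> intro h k hk
    · by_cases hki : k = i
      · exact absurd hk (hki ▸ hsink j)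
      · simp [hki]
    · have := h k hk
      by_cases hki : k = i
      · exact absurd hk (hki ▸ hsink j)
      · simp only [hki, if_false] at this; exact this
  have hiter : ∀ k, 1 ≤ k → (cbnStep adj)^[k] x = (cbnStep adj)^[k] y := by
    intro k hk
    obtain ⟨l, rfl⟩ := Nat.exists_eq_add_of_le hk
    rw [Nat.add_comm, Function.iterate_succ_apply, Function.iterate_succ_apply, hstep]
  have hxy : x = y := by
    apply hObs
    intro k hk j hj
    rcases Nat.eq_zero_or_pos k with rfl | hkpos
    · simp only [Function.iterate_zero, id, hx, hy]
      have : j ≠ i := fun h => hno (h ▸ hj)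
      simp [this]
    · rw [hiter k hkpos]
  have : x i = y i := congrFun hxy i
  simp [hx, hy] at this
end

section
/- If some node X_i of a CBN is not directly observable and is not a sink, but every out-neighbor X_j of X_i has at least two in-neighbors, then the all-zeros initial state and the initial state with only X_i equal to one are indistinguishable, hence the CBN is not observable. -/
/-- If node `X_i` is not directly observable and is not a sink, but every out-neighbor of
`X_i` has at least two in-neighbors, then the all-zeros initial state and the state with
only `X_i` equal to one are indistinguishable, hence the CBN is not observable. -/
theorem not_O1_indistinguishable (n m : ℕ) (adj : Fin n → Fin n → Prop) [DecidableRel adj]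
    (i : Fin n) (hno : ¬ ((i : ℕ) < m)) (hnsink : ∃ j : Fin n, adj i j)
    (htwo : ∀ j : Fin n, adj i j → ∃ p q : Fin n, p ≠ q ∧ adj p j ∧ adj q j) :
    (∀ k : ℕ, ∀ j : Fin n, (j : ℕ) < m →
        (cbnStep adj)^[k] (fun _ => false) j =
        (cbnStep adj)^[k] (fun v => decide (v = i)) j) ∧
      ¬ Observable n m adj := by
  have hstep : cbnStep adj (fun _ => false) = cbnStep adj (fun v => decide (v = i)) := by
    funext j
    simp only [cbnStep]
    congr 1
    apply propext
    constructor
    · intro h p hp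
      exact absurd (h p hp) (by simp)
    · intro h
      intro p hp
      exfalso
      have hpi : p = i := by simpa using h p hp
      obtain ⟨a, b, hab, ha, hb⟩ := htwo j (hpi ▸ hp)
      have hai : a = i := by simpa using h a ha
      have hbi : b = i := by simpa using h b hb
      exact hab (hai.trans hbi.symm)
  have hiter : ∀ k : ℕ, ∀ j : Fin n, (j : ℕ) < m →
      (cbnStep adj)^[k] (fun _ => false) j =
      (cbnStep adj)^[k] (fun v => decide (v = i)) j := by
    intro k j hj
    cases k with
    | zero =>
      simp only [Function.iterate_zero, id]
      have : j ≠ i := fun h => hno (h ▸ hj)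
      simp [this]
    | succ k =>
      rw [Function.iterate_succ_apply, Function.iterate_succ_apply, hstep]
  refine ⟨hiter, ?_⟩
  rintro ⟨N, hObs⟩
  have := hObs (fun _ => false) (fun v => decide (v = i))
    (fun k _ j hj => hiter k j hj)
  have := congrFun this i
  simp at this
end

section
/- If the dependency graph of a CBN satisfies Properties O1 and O2, then the vertex set of the dependency graph can be partitioned into disjoint observed paths (every vertex belongs to exactly one observed path). -/
/-- `UIN adj i j` : `X_j` is a node, other than `X_i`, whose in-neighbor set is exactly `{X_i}`. -/
def UIN {n : ℕ} (adj : Fin n → Fin n → Prop) (i j : Fin n) : Prop :=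
  j ≠ i ∧ ∀ p : Fin n, adj p j ↔ p = i


/-- An observed path: a nonempty sequence of distinct nodes whose last element is
directly observable, and each earlier element is non-directly-observable and is the
unique in-neighbor of its successor. -/
def ObservedPath (n m : ℕ) (adj : Fin n → Fin n → Prop) (L : ℕ) (P : Fin L → Fin n) : Prop :=
  0 < L ∧ Function.Injective P ∧
    (∀ hL : 0 < L, ((P ⟨L - 1, Nat.sub_lt hL one_pos⟩ : Fin n) : ℕ) < m) ∧
    ∀ (t : ℕ) (h : t + 1 < L),
      ¬ ((P ⟨t, Nat.lt_of_succ_lt h⟩ : Fin n) : ℕ) < m ∧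
        UIN adj (P ⟨t, Nat.lt_of_succ_lt h⟩) (P ⟨t + 1, h⟩)

/-- Property O1. -/
def PropertyO1 (n m : ℕ) (adj : Fin n → Fin n → Prop) : Prop :=
  ∀ i : Fin n, ¬ ((i : ℕ) < m) → ∃ j : Fin n, UIN adj i j

/-- Property O2. -/
def PropertyO2 (n m : ℕ) (adj : Fin n → Fin n → Prop) : Prop :=
  ∀ (L : ℕ) (c : Fin L → Fin n) (hL : 0 < L), Function.Injective c →
    (∀ t : Fin L, adj (c t) (c ⟨(t.val + 1) % L, Nat.mod_lt _ hL⟩)) →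
    (∀ t : Fin L, ¬ ((c t : ℕ) < m)) →
    ∃ (t : Fin L) (j : Fin n), (∀ s : Fin L, c s ≠ j) ∧ UIN adj (c t) j


-- Auxiliary machinery

def ValidSel {n : ℕ} (m : ℕ) (adj : Fin n → Fin n → Prop) (σ : Fin n → Fin n) : Prop :=
  ∀ i : Fin n, ¬ ((i : ℕ) < m) → UIN adj i (σ i)

def GoodNode {n : ℕ} (m : ℕ) (σ : Fin n → Fin n) (i : Fin n) : Prop :=
  ∃ k : ℕ, ((σ^[k] i : Fin n) : ℕ) < m

lemma UIN.adj' {n : ℕ} {adj : Fin n → Fin n → Prop} {i j : Fin n} (h : UIN adj i j) :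
    adj i j := (h.2 i).mpr rfl

lemma UIN.unique' {n : ℕ} {adj : Fin n → Fin n → Prop} {i i' j : Fin n}
    (h : UIN adj i j) (h' : UIN adj i' j) : i = i' := (h'.2 i).mp h.adj'

lemma ValidSel.inj' {n m : ℕ} {adj : Fin n → Fin n → Prop} {σ : Fin n → Fin n}
    (hσ : ValidSel m adj σ) {x y : Fin n}
    (hx : ¬ ((x : ℕ) < m)) (hy : ¬ ((y : ℕ) < m)) (hxy : σ x = σ y) : x = y := by
  have h1 : UIN adj x (σ x) := hσ x hx
  have h2 : UIN adj y (σ x) := by rw [hxy]; exact hσ y hy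
  exact h1.unique' h2

lemma exists_goodsel {n m : ℕ} {adj : Fin n → Fin n → Prop}
    (h1 : PropertyO1 n m adj) (h2 : PropertyO2 n m adj) :
    ∃ σ : Fin n → Fin n, ValidSel m adj σ ∧ ∀ i, GoodNode m σ i := by
  classical
  have hne : ∃ σ, ValidSel m adj σ := by
    refine ⟨fun i => if h : (i : ℕ) < m then i else Classical.choose (h1 i h), ?_⟩
    intro i hi
    simp only [dif_neg hi]
    exact Classical.choose_spec (h1 i hi)
  obtain ⟨σ0, hσ0⟩ := hne
  set V : Finset (Fin n → Fin n) := Finset.univ.filter (fun σ => ValidSel m adj σ) with hV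
  have hVne : V.Nonempty := ⟨σ0, by simp [hV, hσ0]⟩
  obtain ⟨σ, hσV, hmax⟩ := Finset.exists_max_image V
    (fun σ => (Finset.univ.filter (fun i => GoodNode m σ i)).card) hVne
  have hσ : ValidSel m adj σ := by
    simpa [hV] using hσV
  refine ⟨σ, hσ, ?_⟩
  by_contra hbad
  push_neg at hbad
  obtain ⟨i0, hi0⟩ := hbad
  set B : Finset (Fin n) := Finset.univ.filter (fun i => ¬ GoodNode m σ i) with hB
  have hBnm : ∀ i ∈ B, ¬ ((i : ℕ) < m) := by
    intro i hi him
    have : GoodNode m σ i := ⟨0, him⟩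
    simp [hB] at hi
    exact hi this
  have hmaps : ∀ i ∈ B, σ i ∈ B := by
    intro i hi
    simp only [hB, Finset.mem_filter, Finset.mem_univ, true_and] at hi ⊢
    intro ⟨k, hk⟩
    exact hi ⟨k + 1, by rwa [Function.iterate_succ_apply]⟩
  have hi0B : i0 ∈ B := by simp [hB, hi0]
  have hsurj : ∀ b ∈ B, ∃ a ∈ B, σ a = b := by
    have := Finset.surj_on_of_inj_on_of_card_le (s := B) (t := B) (fun a _ => σ a)
      (fun a ha => hmaps a ha)
      (fun a₁ a₂ ha₁ ha₂ h => hσ.inj' (hBnm _ ha₁) (hBnm _ ha₂) h) le_rfl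
    intro b hb
    obtain ⟨a, ha, hab⟩ := this b hb
    exact ⟨a, ha, hab.symm⟩
  have hiterB : ∀ x ∈ B, ∀ k : ℕ, σ^[k] x ∈ B := by
    intro x hx k
    induction k with
    | zero => exact hx
    | succ k ih => rw [Function.iterate_succ_apply']; exact hmaps _ ih
  have hcancelB : ∀ (a : ℕ) (x y : Fin n), x ∈ B → y ∈ B → σ^[a] x = σ^[a] y → x = y := by
    intro a
    induction a with
    | zero => intro x y _ _ h; exact h
    | succ a ih =>
      intro x y hx hy h
      rw [Function.iterate_succ_apply', Function.iterate_succ_apply'] at h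
      exact ih x y hx hy
        (hσ.inj' (hBnm _ (hiterB x hx a)) (hBnm _ (hiterB y hy a)) h)
  -- find a period
  have hper : ∃ p : ℕ, 0 < p ∧ σ^[p] i0 = i0 := by
    obtain ⟨a, b, hab, heq⟩ := Finite.exists_ne_map_eq_of_infinite (fun k : ℕ => σ^[k] i0)
    rcases Nat.lt_or_ge a b with h | h
    · refine ⟨b - a, by omega, ?_⟩
      have : σ^[a] (σ^[b - a] i0) = σ^[a] i0 := by
        rw [← Function.iterate_add_apply]
        rw [show a + (b - a) = b by omega]
        exact heq.symm
      exact hcancelB a _ _ (hiterB i0 hi0B _) hi0B this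
    · have hba : b < a := by omega
      refine ⟨a - b, by omega, ?_⟩
      have : σ^[b] (σ^[a - b] i0) = σ^[b] i0 := by
        rw [← Function.iterate_add_apply]
        rw [show b + (a - b) = a by omega]
        exact heq
      exact hcancelB b _ _ (hiterB i0 hi0B _) hi0B this
  set L : ℕ := Nat.find hper with hLdef
  obtain ⟨hLpos, hLper⟩ : 0 < L ∧ σ^[L] i0 = i0 := Nat.find_spec hper
  set c : Fin L → Fin n := fun t => σ^[t.val] i0 with hc
  have hstep : ∀ t : Fin L, c ⟨(t.val + 1) % L, Nat.mod_lt _ hLpos⟩ = σ (c t) := by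
    intro t
    simp only [hc]
    rcases Nat.lt_or_ge (t.val + 1) L with h | h
    · rw [Nat.mod_eq_of_lt h, Function.iterate_succ_apply']
    · have ht1 : t.val + 1 = L := by omega
      rw [ht1, Nat.mod_self]
      rw [← Function.iterate_succ_apply' σ t.val i0, Nat.succ_eq_add_one, ht1, hLper]
      rfl
  have hcinj : Function.Injective c := by
    have key : ∀ a b : ℕ, a ≤ b → b < L → σ^[a] i0 = σ^[b] i0 → a = b := by
      intro a b hab hbL heq
      by_contra hne
      have : σ^[a] (σ^[b - a] i0) = σ^[a] i0 := by
        rw [← Function.iterate_add_apply, show a + (b - a) = b by omega]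
        exact heq.symm
      have hper' : σ^[b - a] i0 = i0 := hcancelB a _ _ (hiterB i0 hi0B _) hi0B this
      exact Nat.find_min hper (show b - a < L by omega) ⟨by omega, hper'⟩
    intro t t' h
    rcases Nat.le_total t.val t'.val with hle | hle
    · exact Fin.ext (key t.val t'.val hle t'.isLt h)
    · exact Fin.ext (key t'.val t.val hle t.isLt h.symm).symm
  have hcnm : ∀ t : Fin L, ¬ ((c t : ℕ) < m) := fun t => hBnm _ (hiterB i0 hi0B t.val)
  have hcadj : ∀ t : Fin L, adj (c t) (c ⟨(t.val + 1) % L, Nat.mod_lt _ hLpos⟩) := by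
    intro t
    rw [hstep t]
    exact (hσ (c t) (hcnm t)).adj'
  obtain ⟨t, j, hjout, hUIN⟩ := h2 L c hLpos hcinj hcadj hcnm
  have hjgood : GoodNode m σ j := by
    by_contra hjB
    have hjB' : j ∈ B := by simp [hB, hjB]
    obtain ⟨a, haB, ha⟩ := hsurj j hjB'
    have : a = c t := ((hσ a (hBnm a haB)).unique' (ha ▸ hUIN))
    have hj : j = c ⟨(t.val + 1) % L, Nat.mod_lt _ hLpos⟩ := by
      rw [hstep t, ← this, ha]
    exact hjout _ hj.symm
  set σ' : Fin n → Fin n := Function.update σ (c t) j with hσ'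
  have hvalid' : ValidSel m adj σ' := by
    intro i hi
    by_cases hict : i = c t
    · subst hict
      rw [hσ', Function.update_self]
      exact hUIN
    · rw [hσ', Function.update_of_ne hict]
      exact hσ i hi
  have hctB : c t ∈ B := hiterB i0 hi0B t.val
  have hctbad : ¬ GoodNode m σ (c t) := by
    simp only [hB, Finset.mem_filter, Finset.mem_univ, true_and] at hctB
    exact hctB
  have htrans : ∀ (k : ℕ) (i : Fin n), ((σ^[k] i : Fin n) : ℕ) < m → GoodNode m σ' i := by
    intro k
    induction k with
    | zero => exact fun i h => ⟨0, h⟩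
    | succ k ih =>
      intro i h
      by_cases him : (i : ℕ) < m
      · exact ⟨0, him⟩
      · have hne : i ≠ c t := by
          intro hict
          exact hctbad (hict ▸ ⟨k + 1, h⟩)
        obtain ⟨k', hk'⟩ := ih (σ i) (by rwa [← Function.iterate_succ_apply])
        refine ⟨k' + 1, ?_⟩
        rw [Function.iterate_succ_apply, hσ', Function.update_of_ne hne]
        exact hk'
  have hgood' : ∀ i : Fin n, GoodNode m σ i → GoodNode m σ' i := by
    intro i ⟨k, hk⟩
    exact htrans k i hk
  have hctgood' : GoodNode m σ' (c t) := by
    obtain ⟨k', hk'⟩ := hgood' j hjgood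
    refine ⟨k' + 1, ?_⟩
    rw [Function.iterate_succ_apply, hσ', Function.update_self]
    exact hk'
  have hsub : Finset.univ.filter (fun i => GoodNode m σ i) ⊂
      Finset.univ.filter (fun i => GoodNode m σ' i) := by
    constructor
    · intro i hi
      simp only [Finset.mem_filter, Finset.mem_univ, true_and] at hi ⊢
      exact hgood' i hi
    · intro hcon
      have := hcon (by simp [hctgood'] :
        c t ∈ Finset.univ.filter (fun i => GoodNode m σ' i))
      simp only [Finset.mem_filter, Finset.mem_univ, true_and] at this
      exact hctbad this
  have hlt := Finset.card_lt_card hsub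
  have hle := hmax σ' (by simp [hV, hvalid'])
  omega

/-- If the dependency graph satisfies Properties O1 and O2, then its vertex set can be
partitioned into disjoint observed paths: every vertex belongs to exactly one path. -/
theorem O1_O2_implies_observed_path_partition (n m : ℕ) (adj : Fin n → Fin n → Prop)
    (h1 : PropertyO1 n m adj) (h2 : PropertyO2 n m adj) :
    ∃ (M : ℕ) (L : Fin M → ℕ) (P : ∀ i : Fin M, Fin (L i) → Fin n),
      (∀ i : Fin M, ObservedPath n m adj (L i) (P i)) ∧
      ∀ v : Fin n, ∃! q : Σ i : Fin M, Fin (L i), P q.1 q.2 = v := by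
  classical
  obtain ⟨σ, hσ, hgood⟩ := exists_goodsel h1 h2
  have hgood' : ∀ i : Fin n, ∃ k : ℕ, ((σ^[k] i : Fin n) : ℕ) < m := hgood
  set rr : Fin n → ℕ := fun i => Nat.find (hgood' i) with hrrdef
  have hrr_obs : ∀ i : Fin n, ((σ^[rr i] i : Fin n) : ℕ) < m := fun i => Nat.find_spec (hgood' i)
  have hrr_min : ∀ (i : Fin n) (k : ℕ), k < rr i → ¬ ((σ^[k] i : Fin n) : ℕ) < m :=
    fun i k hk => Nat.find_min (hgood' i) hk
  have hrr_zero : ∀ i : Fin n, (i : ℕ) < m ↔ rr i = 0 := by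
    intro i
    constructor
    · intro h
      have : rr i ≤ 0 := Nat.find_le (by simpa using h)
      omega
    · intro h
      have := hrr_obs i
      rw [h] at this
      simpa using this
  have hrr_step : ∀ i : Fin n, ¬ ((i : ℕ) < m) → rr (σ i) + 1 = rr i := by
    intro i hi
    have h0 : rr i ≠ 0 := fun h => hi ((hrr_zero i).mpr h)
    have hle : rr (σ i) ≤ rr i - 1 := by
      have hp : ((σ^[rr i - 1] (σ i) : Fin n) : ℕ) < m := by
        have h' : ((σ^[(rr i - 1) + 1] i : Fin n) : ℕ) < m := by
          rw [show (rr i - 1) + 1 = rr i by omega]; exact hrr_obs i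
        rwa [Function.iterate_succ_apply] at h'
      exact Nat.find_le hp
    have hge : ¬ (rr (σ i) + 1 < rr i) := by
      intro hlt
      exact hrr_min i (rr (σ i) + 1) hlt
        (by rw [Function.iterate_succ_apply]; exact hrr_obs (σ i))
    omega
  have hrr_iter : ∀ (a : ℕ) (i : Fin n), a ≤ rr i → rr (σ^[a] i) + a = rr i := by
    intro a
    induction a with
    | zero => intro i _; simp
    | succ a ih =>
      intro i ha
      have hi : ¬ ((i : ℕ) < m) := fun h => by have := (hrr_zero i).mp h; omega
      have hstep := hrr_step i hi
      have h' := ih (σ i) (by omega)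
      rw [Function.iterate_succ_apply]
      omega
  have hcancel : ∀ (k : ℕ) (x y : Fin n), k ≤ rr x → k ≤ rr y → σ^[k] x = σ^[k] y → x = y := by
    intro k
    induction k with
    | zero => intro x y _ _ h; exact h
    | succ k ih =>
      intro x y hx hy h
      have hxm : ¬ ((x : ℕ) < m) := fun hc => by have := (hrr_zero x).mp hc; omega
      have hym : ¬ ((y : ℕ) < m) := fun hc => by have := (hrr_zero y).mp hc; omega
      have hx' := hrr_step x hxm
      have hy' := hrr_step y hym
      rw [Function.iterate_succ_apply, Function.iterate_succ_apply] at h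
      exact hσ.inj' hxm hym (ih (σ x) (σ y) (by omega) (by omega) h)
  have hrr_lt : ∀ i : Fin n, rr i < n := by
    intro i
    have hinj : Function.Injective (fun a : Fin (rr i + 1) => σ^[a.val] i) := by
      intro a b hab
      have ha := hrr_iter a.val i (Nat.lt_succ_iff.mp a.isLt)
      have hb := hrr_iter b.val i (Nat.lt_succ_iff.mp b.isLt)
      simp only at hab
      rw [hab] at ha
      exact Fin.ext (by omega)
    have := Fintype.card_le_of_injective _ hinj
    simpa using this
  set starts : Finset (Fin n) :=
    Finset.univ.filter (fun v => ¬ ∃ i : Fin n, ¬ ((i : ℕ) < m) ∧ σ i = v) with hstartsdef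
  have hmem_starts : ∀ v : Fin n,
      v ∈ starts ↔ ¬ ∃ i : Fin n, ¬ ((i : ℕ) < m) ∧ σ i = v := by
    intro v; simp [hstartsdef]
  have hback : ∀ (k : ℕ) (v : Fin n), n ≤ rr v + k →
      ∃ s, s ∈ starts ∧ ∃ t : ℕ, σ^[t] s = v ∧ rr s = rr v + t := by
    intro k
    induction k with
    | zero => intro v hv; exact absurd (hrr_lt v) (by omega)
    | succ k ih =>
      intro v hv
      by_cases hs : v ∈ starts
      · exact ⟨v, hs, 0, rfl, by simp⟩
      · have hs' : ∃ i : Fin n, ¬ ((i : ℕ) < m) ∧ σ i = v := by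
          by_contra hc
          exact hs ((hmem_starts v).mpr hc)
        obtain ⟨i, him, hiv⟩ := hs'
        have hstep := hrr_step i him
        rw [hiv] at hstep
        obtain ⟨s, hsst, t, hts, hrs⟩ := ih i (by omega)
        refine ⟨s, hsst, t + 1, ?_, by omega⟩
        rw [Function.iterate_succ_apply', hts, hiv]
  have hkey : ∀ s s' : Fin n, s ∈ starts → s' ∈ starts → ∀ t t' : ℕ,
      t ≤ rr s → t' ≤ rr s' → t ≤ t' → σ^[t] s = σ^[t'] s' → s = s' ∧ t = t' := by
    intro s s' hs hs' t t' hts hts' htt heq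
    have hA : σ^[t] (σ^[t' - t] s') = σ^[t'] s' := by
      rw [← Function.iterate_add_apply, show t + (t' - t) = t' by omega]
    have hB : rr (σ^[t' - t] s') + (t' - t) = rr s' := hrr_iter _ _ (by omega)
    have hC : s = σ^[t' - t] s' := hcancel t s _ hts (by omega) (by rw [hA]; exact heq)
    have htt' : t' = t := by
      by_contra hne
      have hD : σ^[t' - t] s' = σ (σ^[t' - t - 1] s') := by
        conv_lhs => rw [show t' - t = (t' - t - 1) + 1 by omega]
        rw [Function.iterate_succ_apply']
      have hnonobs : ¬ ((σ^[t' - t - 1] s' : Fin n) : ℕ) < m := hrr_min s' _ (by omega)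
      exact ((hmem_starts s).mp hs) ⟨_, hnonobs, by rw [← hD, ← hC]⟩
    refine ⟨?_, htt'.symm⟩
    rw [hC, show t' - t = 0 by omega]
    rfl
  refine ⟨starts.card, fun i => rr ((starts.equivFin.symm i : Fin n)) + 1,
    fun i t => σ^[t.val] ((starts.equivFin.symm i : Fin n)), ?_, ?_⟩
  · intro i
    set s : Fin n := (starts.equivFin.symm i : Fin n) with hsdef
    refine ⟨Nat.succ_pos _, ?_, ?_, ?_⟩
    · intro a b hab
      have hab' : σ^[a.val] s = σ^[b.val] s := hab
      have ha := hrr_iter a.val s (Nat.lt_succ_iff.mp a.isLt)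
      have hb := hrr_iter b.val s (Nat.lt_succ_iff.mp b.isLt)
      rw [hab'] at ha
      exact Fin.ext (by omega)
    · intro hL
      exact hrr_obs s
    · intro t ht
      have ht' : t + 1 < rr s + 1 := ht
      have htr : t < rr s := by omega
      refine ⟨hrr_min s t htr, ?_⟩
      have hnm : ¬ ((σ^[t] s : Fin n) : ℕ) < m := hrr_min s t htr
      have hU := hσ _ hnm
      rwa [← Function.iterate_succ_apply' σ t s] at hU
  · intro v
    obtain ⟨s, hs, t, hts, hrs⟩ := hback n v (by omega)
    have htle : t ≤ rr s := by omega
    have hes : ((starts.equivFin.symm (starts.equivFin ⟨s, hs⟩) : Fin n)) = s := by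
      rw [Equiv.symm_apply_apply]
    refine ⟨⟨starts.equivFin ⟨s, hs⟩, ⟨t, by
      show t < rr ((starts.equivFin.symm (starts.equivFin ⟨s, hs⟩) : Fin n)) + 1
      rw [hes]; omega⟩⟩, ?_, ?_⟩
    · show σ^[t] ((starts.equivFin.symm (starts.equivFin ⟨s, hs⟩) : Fin n)) = v
      rw [hes]; exact hts
    · rintro ⟨i', t'⟩ hq
      have hq' : σ^[t'.val] ((starts.equivFin.symm i' : Fin n)) = v := hq
      have hs' : ((starts.equivFin.symm i' : Fin n)) ∈ starts := (starts.equivFin.symm i').2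
      have ht's : t'.val ≤ rr (starts.equivFin.symm i' : Fin n) := Nat.lt_succ_iff.mp t'.isLt
      have hcomb : ((starts.equivFin.symm i' : Fin n)) = s ∧ t'.val = t := by
        rcases Nat.le_total t'.val t with hle | hle
        · obtain ⟨hss, htt⟩ := hkey _ _ hs' hs t'.val t ht's htle hle (by rw [hq', hts])
          exact ⟨hss, htt⟩
        · obtain ⟨hss, htt⟩ := hkey _ _ hs hs' t t'.val htle ht's hle (by rw [hq', hts])
          exact ⟨hss.symm, htt.symm⟩
      have hieq : i' = starts.equivFin ⟨s, hs⟩ := by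
        have : starts.equivFin.symm i' = ⟨s, hs⟩ := Subtype.ext hcomb.1
        rw [← this, Equiv.apply_symm_apply]
      subst hieq
      exact congrArg (Sigma.mk _) (Fin.ext hcomb.2)
end

section
/- If a CBN's dependency graph can be decomposed into disjoint observed paths O^1,...,O^m of lengths N_1,...,N_m, then the CBN is observable on [0, max_i N_i − 1], and the initial state can be uniquely reconstructed from the output sequence on this interval. -/
lemma cbn_key {n m : ℕ} (adj : Fin n → Fin n → Prop) [DecidableRel adj]
    {L : ℕ} {P : Fin L → Fin n} (hP : ObservedPath n m adj L P) (x : Fin n → Bool) :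
    ∀ (k t : ℕ) (h : t + k < L),
      (cbnStep adj)^[k] x (P ⟨t + k, h⟩) = x (P ⟨t, by omega⟩) := by
  intro k
  induction k with
  | zero => intro t h; simp
  | succ k ih =>
    intro t h
    have h' : (t + k) + 1 < L := by omega
    have huin := (hP.2.2.2 (t + k) h').2
    have hrw : P ⟨t + (k + 1), h⟩ = P ⟨(t + k) + 1, h'⟩ := by congr 1
    rw [hrw, Function.iterate_succ_apply']
    have : cbnStep adj ((cbnStep adj)^[k] x) (P ⟨(t+k)+1, h'⟩)
        = (cbnStep adj)^[k] x (P ⟨t + k, by omega⟩) := by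
      simp [cbnStep, huin.2]
    rw [this, ih t (by omega)]

/-- If the dependency graph can be decomposed into disjoint observed paths of lengths
`L 0, …, L (M-1)`, then the CBN is observable on `[0, max_i L i - 1]`: the initial state is
uniquely determined by the output sequence on this interval. -/
theorem observed_path_decomposition_implies_observableOn (n m : ℕ)
    (adj : Fin n → Fin n → Prop) [DecidableRel adj]
    (M : ℕ) (L : Fin M → ℕ) (P : ∀ i : Fin M, Fin (L i) → Fin n)
    (hpaths : ∀ i : Fin M, ObservedPath n m adj (L i) (P i))
    (hcover : ∀ v : Fin n, ∃! q : Σ i : Fin M, Fin (L i), P q.1 q.2 = v) :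
    ObservableOn n m adj (Finset.univ.sup L - 1) := by
  intro x y hxy
  funext v
  obtain ⟨⟨i, t⟩, hPt, -⟩ := hcover v
  subst hPt
  have hP := hpaths i
  have hLpos : 0 < L i := hP.1
  have ht : (t : ℕ) < L i := t.isLt
  set k := L i - 1 - (t : ℕ) with hk
  have hsum : (t : ℕ) + k < L i := by omega
  have hsup : L i ≤ Finset.univ.sup L := Finset.le_sup (Finset.mem_univ i)
  have hkle : k ≤ Finset.univ.sup L - 1 := by omega
  have hx := cbn_key adj hP x k t hsum
  have hy := cbn_key adj hP y k t hsum
  have hend : (⟨(t : ℕ) + k, hsum⟩ : Fin (L i)) = ⟨L i - 1, Nat.sub_lt hLpos one_pos⟩ := by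
    exact Fin.mk_eq_mk.mpr (by omega)
  have hobs : ((P i ⟨(t : ℕ) + k, hsum⟩ : Fin n) : ℕ) < m := by
    rw [hend]; exact hP.2.2.1 hLpos
  have heq := hxy k hkle _ hobs
  have hfin : (⟨(t : ℕ), by omega⟩ : Fin (L i)) = t := by ext; rfl
  rw [hx, hy, hfin] at heq
  exact heq
end
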